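/- Let a < b and let φ₁, φ₂ : (a,b) → ℝ be smooth, strictly increasing and convex (φᵢ' > 0, φᵢ'' ≥ 0) with φ₁'(t) > φ₂'(t) for all t ∈ (a,b). Fix u₀ ∈ (a,b) and r₀ > 0, and for i = 1,2 let uᵢ ∈ C²([0,r₀]) with values in (a,b) satisfy uᵢ(0) = u₀, uᵢ'(0) = 0 and uᵢ''(r) = (1 + uᵢ'(r)²)·(φᵢ'(uᵢ(r)) − uᵢ'(r)/r) for all r ∈ (0,r₀]. Then u₁'(r) > u₂'(r) for every r ∈ (0,r₀). -/
import Mathlib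

open Set Filter Topology

/-- At `r = 0`, a C² solution of the rotational `[φ,e₃]`-minimal equation satisfies
`u''(0) = φ'(u(0))/2`. -/
lemma aux_half {r₀ : ℝ} (hr₀ : 0 < r₀) {u u' u'' φ' : ℝ → ℝ}
    (hd : HasDerivWithinAt u' (u'' 0) (Icc 0 r₀) 0)
    (h0' : u' 0 = 0)
    (hc : ContinuousWithinAt u'' (Icc 0 r₀) 0)
    (hφu : ContinuousWithinAt (fun r => φ' (u r)) (Icc 0 r₀) 0)
    (hu'c : ContinuousWithinAt u' (Icc 0 r₀) 0)
    (heq : ∀ r ∈ Ioc 0 r₀, u'' r = (1 + u' r ^ 2) * (φ' (u r) - u' r / r)) :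
    u'' 0 = φ' (u 0) / 2 := by
  have hIoc : Icc (0:ℝ) r₀ \ {0} = Ioc 0 r₀ := by
    ext x; simp [mem_Icc, mem_Ioc, and_comm, lt_iff_le_and_ne, and_assoc, eq_comm]
  have hne : (𝓝[Ioc (0:ℝ) r₀] 0).NeBot := by
    refine mem_closure_iff_nhdsWithin_neBot.mp ?_
    rw [closure_Ioc hr₀.ne]
    exact left_mem_Icc.mpr hr₀.le
  have hmono : 𝓝[Ioc (0:ℝ) r₀] 0 ≤ 𝓝[Icc (0:ℝ) r₀] 0 :=
    nhdsWithin_mono _ Ioc_subset_Icc_self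
  have hslope : Tendsto (fun r => u' r / r) (𝓝[Ioc (0:ℝ) r₀] 0) (𝓝 (u'' 0)) := by
    have := hasDerivWithinAt_iff_tendsto_slope.mp hd
    rw [hIoc] at this
    refine this.congr' ?_
    filter_upwards [eventually_mem_nhdsWithin] with r hr
    simp [slope_def_field, h0']
  have hT2 : Tendsto u'' (𝓝[Ioc (0:ℝ) r₀] 0) (𝓝 (u'' 0)) := hc.tendsto.mono_left hmono
  have hu'0 : Tendsto u' (𝓝[Ioc (0:ℝ) r₀] 0) (𝓝 0) := by
    have := hu'c.tendsto.mono_left hmono; rwa [h0'] at this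
  have hφ0 : Tendsto (fun r => φ' (u r)) (𝓝[Ioc (0:ℝ) r₀] 0) (𝓝 (φ' (u 0))) :=
    hφu.tendsto.mono_left hmono
  have hT3 : Tendsto u'' (𝓝[Ioc (0:ℝ) r₀] 0)
      (𝓝 ((1 + 0 ^ 2) * (φ' (u 0) - u'' 0))) := by
    have : Tendsto (fun r => (1 + u' r ^ 2) * (φ' (u r) - u' r / r)) (𝓝[Ioc (0:ℝ) r₀] 0)
        (𝓝 ((1 + 0 ^ 2) * (φ' (u 0) - u'' 0))) :=
      ((tendsto_const_nhds.add (hu'0.pow 2)).mul (hφ0.sub hslope))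
    refine this.congr' ?_
    filter_upwards [eventually_mem_nhdsWithin] with r hr
    exact (heq r hr).symm
  have h := tendsto_nhds_unique hT2 hT3
  have h2 : u'' 0 = φ' (u 0) - u'' 0 := by simpa using h
  linarith

/-- Comparison of rotationally symmetric `[φᵢ,e₃]`-minimal graphs:
if `φ₁, φ₂ : (a,b) → ℝ` are smooth, strictly increasing and convex with `φ₁' > φ₂'`,
and `u₁, u₂` are the C² solutions on `[0,r₀]` of
`uᵢ'' = (1 + uᵢ'²)(φᵢ'(uᵢ) - uᵢ'/r)` with `uᵢ(0) = u₀`, `uᵢ'(0) = 0`,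
then `u₁' > u₂'` on `(0, r₀)`. -/
theorem stmt_9 (a b : ℝ) (hab : a < b) (φ₁ φ₁' φ₂ φ₂' : ℝ → ℝ)
    (hφ₁sm : ContDiffOn ℝ (⊤ : ℕ∞) φ₁ (Ioo a b))
    (hφ₂sm : ContDiffOn ℝ (⊤ : ℕ∞) φ₂ (Ioo a b))
    (hφ₁d : ∀ t ∈ Ioo a b, HasDerivAt φ₁ (φ₁' t) t)
    (hφ₂d : ∀ t ∈ Ioo a b, HasDerivAt φ₂ (φ₂' t) t)
    (hφ₁pos : ∀ t ∈ Ioo a b, 0 < φ₁' t)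
    (hφ₂pos : ∀ t ∈ Ioo a b, 0 < φ₂' t)
    (hφ₁cvx : ConvexOn ℝ (Ioo a b) φ₁)
    (hφ₂cvx : ConvexOn ℝ (Ioo a b) φ₂)
    (hcmp : ∀ t ∈ Ioo a b, φ₂' t < φ₁' t)
    (u₀ : ℝ) (hu₀ : u₀ ∈ Ioo a b) (r₀ : ℝ) (hr₀ : 0 < r₀)
    (u₁ u₁' u₁'' u₂ u₂' u₂'' : ℝ → ℝ)
    (h₁mem : ∀ r ∈ Icc (0 : ℝ) r₀, u₁ r ∈ Ioo a b)
    (h₁d : ∀ r ∈ Icc (0 : ℝ) r₀, HasDerivWithinAt u₁ (u₁' r) (Icc 0 r₀) r)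
    (h₁d2 : ∀ r ∈ Icc (0 : ℝ) r₀, HasDerivWithinAt u₁' (u₁'' r) (Icc 0 r₀) r)
    (h₁c : ContinuousOn u₁'' (Icc 0 r₀))
    (h₁0 : u₁ 0 = u₀) (h₁0' : u₁' 0 = 0)
    (h₁eq : ∀ r ∈ Ioc (0 : ℝ) r₀, u₁'' r = (1 + u₁' r ^ 2) * (φ₁' (u₁ r) - u₁' r / r))
    (h₂mem : ∀ r ∈ Icc (0 : ℝ) r₀, u₂ r ∈ Ioo a b)
    (h₂d : ∀ r ∈ Icc (0 : ℝ) r₀, HasDerivWithinAt u₂ (u₂' r) (Icc 0 r₀) r)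
    (h₂d2 : ∀ r ∈ Icc (0 : ℝ) r₀, HasDerivWithinAt u₂' (u₂'' r) (Icc 0 r₀) r)
    (h₂c : ContinuousOn u₂'' (Icc 0 r₀))
    (h₂0 : u₂ 0 = u₀) (h₂0' : u₂' 0 = 0)
    (h₂eq : ∀ r ∈ Ioc (0 : ℝ) r₀, u₂'' r = (1 + u₂' r ^ 2) * (φ₂' (u₂ r) - u₂' r / r)) :
    ∀ r ∈ Ioo (0 : ℝ) r₀, u₂' r < u₁' r := by
  have hopen : IsOpen (Ioo a b) := isOpen_Ioo
  -- continuity of the derivatives of φᵢ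
  have hφ₁'c : ContinuousOn φ₁' (Ioo a b) :=
    (hφ₁sm.continuousOn_deriv_of_isOpen hopen (by exact_mod_cast le_top)).congr
      fun t ht => ((hφ₁d t ht).deriv).symm
  have hφ₂'c : ContinuousOn φ₂' (Ioo a b) :=
    (hφ₂sm.continuousOn_deriv_of_isOpen hopen (by exact_mod_cast le_top)).congr
      fun t ht => ((hφ₂d t ht).deriv).symm
  -- monotonicity of φ₁' from convexity
  have hmono₁ : ∀ x ∈ Ioo a b, ∀ y ∈ Ioo a b, x ≤ y → φ₁' x ≤ φ₁' y := by
    intro x hx y hy hxy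
    rcases hxy.lt_or_eq with h | h
    · exact le_trans (hφ₁cvx.le_slope_of_hasDerivAt hx hy h (hφ₁d x hx))
        (hφ₁cvx.slope_le_of_hasDerivAt hx hy h (hφ₁d y hy))
    · rw [h]
  have h0mem : (0:ℝ) ∈ Icc (0:ℝ) r₀ := left_mem_Icc.mpr hr₀.le
  -- second derivatives at 0
  have hL₁ : u₁'' 0 = φ₁' u₀ / 2 := by
    have hφu : ContinuousWithinAt (fun r => φ₁' (u₁ r)) (Icc 0 r₀) 0 := by
      have hu₁c : ContinuousWithinAt u₁ (Icc 0 r₀) 0 := (h₁d 0 h0mem).continuousWithinAt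
      have hca : ContinuousAt φ₁' (u₁ 0) :=
        (hφ₁'c.continuousAt (hopen.mem_nhds (h₁mem 0 h0mem)))
      exact hca.comp_continuousWithinAt hu₁c
    have := aux_half hr₀ (h₁d2 0 h0mem) h₁0' (h₁c 0 h0mem) hφu
      (h₁d2 0 h0mem).continuousWithinAt h₁eq
    rwa [h₁0] at this
  have hL₂ : u₂'' 0 = φ₂' u₀ / 2 := by
    have hφu : ContinuousWithinAt (fun r => φ₂' (u₂ r)) (Icc 0 r₀) 0 := by
      have hu₂c : ContinuousWithinAt u₂ (Icc 0 r₀) 0 := (h₂d 0 h0mem).continuousWithinAt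
      have hca : ContinuousAt φ₂' (u₂ 0) :=
        (hφ₂'c.continuousAt (hopen.mem_nhds (h₂mem 0 h0mem)))
      exact hca.comp_continuousWithinAt hu₂c
    have := aux_half hr₀ (h₂d2 0 h0mem) h₂0' (h₂c 0 h0mem) hφu
      (h₂d2 0 h0mem).continuousWithinAt h₂eq
    rwa [h₂0] at this
  -- the difference of derivatives
  set w : ℝ → ℝ := fun r => u₁' r - u₂' r with hwdef
  have hwd : ∀ r ∈ Icc (0:ℝ) r₀, HasDerivWithinAt w (u₁'' r - u₂'' r) (Icc 0 r₀) r :=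
    fun r hr => (h₁d2 r hr).sub (h₂d2 r hr)
  have hw0 : w 0 = 0 := by simp [hwdef, h₁0', h₂0']
  have hwcont : ContinuousOn w (Icc 0 r₀) := fun r hr => (hwd r hr).continuousWithinAt
  have hw'0pos : 0 < u₁'' 0 - u₂'' 0 := by
    rw [hL₁, hL₂]; have := hcmp u₀ hu₀; linarith
  -- positivity of w near 0
  have hIoc : Icc (0:ℝ) r₀ \ {0} = Ioc 0 r₀ := by
    ext x; simp [mem_Icc, mem_Ioc, and_comm, lt_iff_le_and_ne, and_assoc, eq_comm]
  have hslope : Tendsto (fun r => w r / r) (𝓝[Ioc (0:ℝ) r₀] 0) (𝓝 (u₁'' 0 - u₂'' 0)) := by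
    have := hasDerivWithinAt_iff_tendsto_slope.mp (hwd 0 h0mem)
    rw [hIoc] at this
    refine this.congr' ?_
    filter_upwards [eventually_mem_nhdsWithin] with r hr
    simp [slope_def_field, hw0]
  have hev : ∀ᶠ r in 𝓝[Ioc (0:ℝ) r₀] 0, 0 < w r / r :=
    hslope.eventually (eventually_gt_nhds hw'0pos)
  obtain ⟨ε, hε, hball⟩ := Metric.mem_nhdsWithin_iff.mp hev
  have hnear : ∀ r, 0 < r → r < ε → r ≤ r₀ → 0 < w r := by
    intro r h1 h2 h3
    have hmemb : r ∈ Metric.ball (0:ℝ) ε ∩ Ioc 0 r₀ := by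
      constructor
      · simp [Metric.mem_ball, Real.dist_eq, abs_of_pos h1, h2]
      · exact ⟨h1, h3⟩
    have hq : 0 < w r / r := hball hmemb
    rcases div_pos_iff.mp hq with ⟨h, _⟩ | ⟨_, h⟩
    · exact h
    · linarith
  -- main argument
  intro r₁ hr₁
  by_contra hcon
  push_neg at hcon
  have hwr₁ : w r₁ ≤ 0 := by simp [hwdef]; linarith
  set δ : ℝ := min ε r₁ / 2 with hδdef
  have hδpos : 0 < δ := by
    have := lt_min hε hr₁.1
    simp only [hδdef]; linarith
  have hδε : δ < ε := by
    have : min ε r₁ ≤ ε := min_le_left _ _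
    simp only [hδdef]; linarith
  have hδr₁ : δ < r₁ := by
    have : min ε r₁ ≤ r₁ := min_le_right _ _
    simp only [hδdef]; linarith
  have hsubδ : Icc δ r₁ ⊆ Icc (0:ℝ) r₀ :=
    Icc_subset_Icc hδpos.le hr₁.2.le
  -- the first zero of w
  set K : Set ℝ := Icc δ r₁ ∩ w ⁻¹' Iic 0 with hKdef
  have hKclosed : IsClosed K :=
    (hwcont.mono hsubδ).preimage_isClosed_of_isClosed isClosed_Icc isClosed_Iic
  have hKcomp : IsCompact K :=
    isCompact_Icc.of_isClosed_subset hKclosed inter_subset_left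
  have hKne : K.Nonempty := ⟨r₁, ⟨⟨hδr₁.le, le_rfl⟩, hwr₁⟩⟩
  obtain ⟨c, hcK, hclb⟩ := hKcomp.exists_isLeast hKne
  have hcIcc : c ∈ Icc δ r₁ := hcK.1
  have hcw : w c ≤ 0 := hcK.2
  have hcpos : 0 < c := lt_of_lt_of_le hδpos hcIcc.1
  have hcr₀' : c < r₀ := lt_of_le_of_lt hcIcc.2 hr₁.2
  have hcmem : c ∈ Icc (0:ℝ) r₀ := ⟨hcpos.le, hcr₀'.le⟩
  -- w is positive on (0, c)
  have hwpos : ∀ x ∈ Ioo (0:ℝ) c, 0 < w x := by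
    intro x hx
    by_cases hxδ : x < δ
    · exact hnear x hx.1 (lt_trans hxδ hδε) (le_trans hx.2.le hcr₀'.le)
    · push_neg at hxδ
      by_contra hle
      push_neg at hle
      have hxK : x ∈ K := ⟨⟨hxδ, le_trans hx.2.le hcIcc.2⟩, hle⟩
      exact absurd (hclb hxK) (not_le.mpr hx.2)
  -- w c = 0
  have hwc0 : w c = 0 := by
    refine le_antisymm hcw ?_
    have hne2 : (𝓝[Ioo (0:ℝ) c] c).NeBot := by
      refine mem_closure_iff_nhdsWithin_neBot.mp ?_
      rw [closure_Ioo hcpos.ne]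
      exact right_mem_Icc.mpr hcpos.le
    have hsub2 : Ioo (0:ℝ) c ⊆ Icc 0 r₀ := fun x hx => ⟨hx.1.le, le_trans hx.2.le hcr₀'.le⟩
    have htd : Tendsto w (𝓝[Ioo (0:ℝ) c] c) (𝓝 (w c)) :=
      ((hwcont c hcmem).mono hsub2).tendsto
    refine ge_of_tendsto htd ?_
    filter_upwards [eventually_mem_nhdsWithin] with x hx
    exact (hwpos x hx).le
  -- derivative of w at c from the left is nonpositive
  have hd_le : u₁'' c - u₂'' c ≤ 0 := by
    have hwdc : HasDerivWithinAt w (u₁'' c - u₂'' c) (Icc 0 c) c :=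
      (hwd c hcmem).mono (Icc_subset_Icc le_rfl hcr₀'.le)
    have hIco : Icc (0:ℝ) c \ {c} = Ico 0 c := by
      ext x; simp only [mem_diff, mem_Icc, mem_Ico, mem_singleton_iff]
      constructor
      · rintro ⟨⟨h1, h2⟩, h3⟩; exact ⟨h1, lt_of_le_of_ne h2 h3⟩
      · rintro ⟨h1, h2⟩; exact ⟨⟨h1, h2.le⟩, h2.ne⟩
    have := hasDerivWithinAt_iff_tendsto_slope.mp hwdc
    rw [hIco] at this
    have hne3 : (𝓝[Ico (0:ℝ) c] c).NeBot := by
      refine mem_closure_iff_nhdsWithin_neBot.mp ?_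
      rw [closure_Ico hcpos.ne]
      exact right_mem_Icc.mpr hcpos.le
    refine le_of_tendsto this ?_
    filter_upwards [eventually_mem_nhdsWithin] with x hx
    have hwx : 0 ≤ w x := by
      rcases hx.1.eq_or_lt with h | h
      · rw [← h, hw0]
      · exact (hwpos x ⟨h, hx.2⟩).le
    rw [slope_def_field, hwc0, sub_zero]
    exact div_nonpos_of_nonneg_of_nonpos hwx (by linarith [hx.2])
  -- u₂ c < u₁ c
  have hsubc : Icc (0:ℝ) c ⊆ Icc 0 r₀ := Icc_subset_Icc le_rfl hcr₀'.le
  have hvmono : StrictMonoOn (fun x => u₁ x - u₂ x) (Icc 0 c) := by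
    apply strictMonoOn_of_deriv_pos (convex_Icc 0 c)
    · exact fun x hx =>
        (((h₁d x (hsubc hx)).sub (h₂d x (hsubc hx))).continuousWithinAt).mono hsubc
    · intro x hx
      rw [interior_Icc] at hx
      have hxmem : x ∈ Icc (0:ℝ) r₀ := ⟨hx.1.le, le_trans hx.2.le hcr₀'.le⟩
      have hnx : Icc (0:ℝ) r₀ ∈ 𝓝 x :=
        Icc_mem_nhds hx.1 (lt_trans hx.2 hcr₀')
      have hder : HasDerivAt (fun x => u₁ x - u₂ x) (w x) x :=
        ((h₁d x hxmem).sub (h₂d x hxmem)).hasDerivAt hnx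
      rw [hder.deriv]
      exact hwpos x hx
  have huc : u₂ c < u₁ c := by
    have := hvmono (left_mem_Icc.mpr hcpos.le) (right_mem_Icc.mpr hcpos.le) hcpos
    simp only [h₁0, h₂0, sub_self] at this
    linarith
  -- final contradiction
  have hp : u₁' c = u₂' c := by
    have : u₁' c - u₂' c = 0 := hwc0
    linarith
  have hu₁cm : u₁ c ∈ Ioo a b := h₁mem c hcmem
  have hu₂cm : u₂ c ∈ Ioo a b := h₂mem c hcmem
  have h1 : φ₂' (u₂ c) < φ₁' (u₁ c) :=
    lt_of_lt_of_le (hcmp (u₂ c) hu₂cm) (hmono₁ (u₂ c) hu₂cm (u₁ c) hu₁cm huc.le)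
  have hq2 : (0:ℝ) < 1 + u₂' c ^ 2 := by positivity
  have hfin : 0 < u₁'' c - u₂'' c := by
    rw [h₁eq c ⟨hcpos, hcr₀'.le⟩, h₂eq c ⟨hcpos, hcr₀'.le⟩, hp]
    nlinarith [mul_pos hq2 (sub_pos.mpr h1)]
  linarith
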